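/- Let F be the probabilistic refinement of a spectral point, G a graph, P ∈ 𝒫(V(G)), and S ⊆ V(G). Then log f(G[S]) ≥ F(G,P) − (1 − P(S))·log|V(G)| − 1. -/

import Mathlib

open Finset MeasureTheory Filter Real

noncomputable section

/-- Strong product of simple graphs. -/
def strongProd {V W : Type} (G : SimpleGraph V) (H : SimpleGraph W) : SimpleGraph (V × W) where
  Adj a b := a ≠ b ∧ (G.Adj a.1 b.1 ∨ a.1 = b.1) ∧ (H.Adj a.2 b.2 ∨ a.2 = b.2)
  symm := ⟨by
    rintro a b ⟨hne, h1, h2⟩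
    exact ⟨hne.symm, h1.imp (fun h => G.adj_symm h) Eq.symm, h2.imp (fun h => H.adj_symm h) Eq.symm⟩⟩
  loopless := ⟨fun a h => h.1 rfl⟩

/-- n-th strong power of a simple graph. -/
def strongPow {V : Type} (G : SimpleGraph V) (n : ℕ) : SimpleGraph (Fin n → V) where
  Adj x y := x ≠ y ∧ ∀ i, G.Adj (x i) (y i) ∨ x i = y i
  symm := ⟨by
    rintro x y ⟨hne, h⟩
    exact ⟨hne.symm, fun i => (h i).imp (fun h' => G.adj_symm h') Eq.symm⟩⟩
  loopless := ⟨fun x h => h.1 rfl⟩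

/-- Disjoint union of simple graphs. -/
def sumGraph {V W : Type} (G : SimpleGraph V) (H : SimpleGraph W) : SimpleGraph (V ⊕ W) where
  Adj a b := Sum.LiftRel G.Adj H.Adj a b
  symm := ⟨by
    rintro a b (h | h)
    · exact Sum.LiftRel.inl (G.adj_symm ‹_›)
    · exact Sum.LiftRel.inr (H.adj_symm ‹_›)⟩
  loopless := ⟨by
    rintro a (h | h)
    · exact G.loopless.irrefl _ ‹_›
    · exact H.loopless.irrefl _ ‹_›⟩

/-- An element of the asymptotic spectrum of graphs. -/
structure SpectralPoint where
  f : ∀ (V : Type) [Fintype V], SimpleGraph V → ℝ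
  nonneg : ∀ (V : Type) [Fintype V] (G : SimpleGraph V), 0 ≤ f V G
  map_sum : ∀ (V W : Type) [Fintype V] [Fintype W] (G : SimpleGraph V) (H : SimpleGraph W),
    f (V ⊕ W) (sumGraph G H) = f V G + f W H
  map_strong : ∀ (V W : Type) [Fintype V] [Fintype W] (G : SimpleGraph V) (H : SimpleGraph W),
    f (V × W) (strongProd G H) = f V G * f W H
  mono : ∀ (V W : Type) [Fintype V] [Fintype W] (G : SimpleGraph V) (H : SimpleGraph W),
    (Hᶜ →g Gᶜ) → f W H ≤ f V G
  map_edgeless : ∀ d : ℕ, f (Fin d) ⊥ = d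

def IsDistr {V : Type} [Fintype V] (P : V → ℝ) : Prop := (∀ v, 0 ≤ P v) ∧ ∑ v, P v = 1

def margFst {V W : Type} [Fintype W] (P : V × W → ℝ) : V → ℝ := fun v => ∑ w, P (v, w)
def margSnd {V W : Type} [Fintype V] (P : V × W → ℝ) : W → ℝ := fun w => ∑ v, P (v, w)

open scoped Classical in
/-- Pushforward of a distribution along a map. -/
def push {V W : Type} [Fintype W] (φ : W → V) (P : W → ℝ) : V → ℝ :=
  fun v => ∑ w, if φ w = v then P w else 0

/-- Shannon entropy (base 2). -/
def ent2 {V : Type} [Fintype V] (P : V → ℝ) : ℝ := ∑ v, -(P v * Real.logb 2 (P v))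

/-- Binary entropy. -/
def binEnt (p : ℝ) : ℝ := -(p * Real.logb 2 p) - ((1 - p) * Real.logb 2 (1 - p))

/-- A spectral point together with its probabilistic refinement and its
characterizing properties. -/
structure PRefinement extends SpectralPoint where
  F : ∀ (V : Type) [Fintype V], SimpleGraph V → (V → ℝ) → ℝ
  concave : ∀ (V : Type) [Fintype V] (G : SimpleGraph V) (P Q : V → ℝ) (t : ℝ),
    IsDistr P → IsDistr Q → 0 ≤ t → t ≤ 1 →
    t * F V G P + (1 - t) * F V G Q ≤ F V G (fun v => t * P v + (1 - t) * Q v)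
  subadd : ∀ (V W : Type) [Fintype V] [Fintype W] (G : SimpleGraph V) (H : SimpleGraph W)
    (P : V × W → ℝ), IsDistr P →
    F (V × W) (strongProd G H) P ≤ F V G (margFst P) + F W H (margSnd P)
  subadd' : ∀ (V W : Type) [Fintype V] [Fintype W] (G : SimpleGraph V) (H : SimpleGraph W)
    (P : V × W → ℝ), IsDistr P →
    F V G (margFst P) + F W H (margSnd P) ≤
      F (V × W) (strongProd G H) P + (ent2 (margFst P) + ent2 (margSnd P) - ent2 P)
  map_sumF : ∀ (V W : Type) [Fintype V] [Fintype W] (G : SimpleGraph V) (H : SimpleGraph W)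
    (PG : V → ℝ) (PH : W → ℝ) (p : ℝ), IsDistr PG → IsDistr PH → 0 ≤ p → p ≤ 1 →
    F (V ⊕ W) (sumGraph G H) (Sum.elim (fun v => p * PG v) (fun w => (1 - p) * PH w)) =
      p * F V G PG + (1 - p) * F W H PH + binEnt p
  monoF : ∀ (V W : Type) [Fintype V] [Fintype W] (G : SimpleGraph V) (H : SimpleGraph W)
    (φ : Hᶜ →g Gᶜ) (P : W → ℝ), IsDistr P → F W H P ≤ F V G (push φ P)
  le_logf : ∀ (V : Type) [Fintype V] (G : SimpleGraph V) (P : V → ℝ), IsDistr P →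
    F V G P ≤ Real.logb 2 (f V G)
  exists_max : ∀ (V : Type) [Fintype V] [Nonempty V] (G : SimpleGraph V),
    ∃ P, IsDistr P ∧ F V G P = Real.logb 2 (f V G)


lemma binEnt_le_one (p : ℝ) : binEnt p ≤ 1 := by
  have h2 : (0:ℝ) < Real.log 2 := Real.log_pos one_lt_two
  have heq : binEnt p = Real.binEntropy p / Real.log 2 := by
    unfold binEnt Real.binEntropy Real.logb
    rw [Real.log_inv, Real.log_inv]
    ring
  rw [heq, div_le_one h2]
  exact Real.binEntropy_le_log_two

lemma one_le_f (R : SpectralPoint) (V : Type) [Fintype V] [Nonempty V] (G : SimpleGraph V) :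
    1 ≤ R.f V G := by
  have h := R.mono V (Fin 1) G ⊥
    ⟨fun _ => Classical.arbitrary V, fun {a b} hab => absurd (Subsingleton.elim a b) hab.ne⟩
  rwa [R.map_edgeless 1, Nat.cast_one] at h

lemma f_le_card (R : SpectralPoint) (V : Type) [Fintype V] (G : SimpleGraph V) :
    R.f V G ≤ (Fintype.card V : ℝ) := by
  set e := Fintype.equivFin V
  have h := R.mono (Fin (Fintype.card V)) V ⊥ G
    ⟨fun v => e v, fun {a b} hab => by
      rw [SimpleGraph.compl_adj]
      exact ⟨fun h => hab.ne (e.injective h), fun h => h⟩⟩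
  rwa [R.map_edgeless] at h

lemma f_isEmpty (R : SpectralPoint) (W : Type) [Fintype W] [IsEmpty W] (H : SimpleGraph W) :
    R.f W H = 0 := by
  have hsum := R.map_sum W W H H
  have h1 : R.f (W ⊕ W) (sumGraph H H) ≤ R.f W H :=
    R.mono W (W ⊕ W) H (sumGraph H H) ⟨fun x => isEmptyElim x, fun {a b} _ => isEmptyElim a⟩
  have h2 : R.f W H ≤ R.f (W ⊕ W) (sumGraph H H) :=
    R.mono (W ⊕ W) W (sumGraph H H) H ⟨Sum.inl, fun {a b} _ => isEmptyElim a⟩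
  linarith
theorem logf_induced_subgraph_ge
    (R : PRefinement) (V : Type) [Fintype V] (G : SimpleGraph V)
    (P : V → ℝ) (hP : IsDistr P) (S : Finset V) :
    R.F V G P - (1 - ∑ v ∈ S, P v) * Real.logb 2 (Fintype.card V : ℝ) - 1 ≤
      Real.logb 2 (R.f _ (G.induce (↑S : Set V))) := by
  obtain ⟨hP0, hP1⟩ := hP
  have hV : Nonempty V := by
    by_contra h
    rw [not_nonempty_iff] at h
    rw [Finset.univ_eq_empty, Finset.sum_empty] at hP1
    exact one_ne_zero hP1.symm
  set p := ∑ v ∈ S, P v with hp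
  have hp0 : 0 ≤ p := Finset.sum_nonneg fun v _ => hP0 v
  have hp1 : p ≤ 1 := by
    rw [← hP1]
    exact Finset.sum_le_sum_of_subset_of_nonneg (Finset.subset_univ S) fun v _ _ => hP0 v
  have hcard1 : (1:ℝ) ≤ (Fintype.card V : ℝ) := by exact_mod_cast Fintype.card_pos
  have hlogV : 0 ≤ Real.logb 2 (Fintype.card V : ℝ) := Real.logb_nonneg one_lt_two hcard1
  have hFle : R.F V G P ≤ Real.logb 2 (R.f V G) := R.le_logf V G P ⟨hP0, hP1⟩
  have hfG1 : (1:ℝ) ≤ R.f V G := one_le_f R.toSpectralPoint V G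
  have hfGle : Real.logb 2 (R.f V G) ≤ Real.logb 2 (Fintype.card V : ℝ) := by
    rw [Real.logb_le_logb one_lt_two (by linarith) (by linarith)]
    exact f_le_card R.toSpectralPoint V G
  rcases eq_or_ne S ∅ with hS | hSne
  · subst hS
    haveI : IsEmpty ↥((↑(∅ : Finset V)) : Set V) := ⟨fun x => by simpa using x.2⟩
    rw [f_isEmpty R.toSpectralPoint _ _, Real.logb_zero]
    simp only [Finset.sum_empty, hp] at *
    linarith
  haveI : DecidableEq V := Classical.decEq V
  obtain ⟨v₀, hv₀⟩ := Finset.nonempty_iff_ne_empty.2 hSne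
  haveI hA : Nonempty ↥((↑S : Set V)) := ⟨⟨v₀, by simpa using hv₀⟩⟩
  have hfS1 : (1:ℝ) ≤ R.f _ (G.induce (↑S : Set V)) := one_le_f R.toSpectralPoint _ _
  have hlogS : 0 ≤ Real.logb 2 (R.f _ (G.induce (↑S : Set V))) :=
    Real.logb_nonneg one_lt_two hfS1
  rcases eq_or_ne Sᶜ ∅ with hT | hTne
  · -- S = univ
    have hSuniv : S = Finset.univ := by
      rwa [Finset.compl_eq_empty_iff] at hT
    have hpeq : p = 1 := by rw [hp, hSuniv]; exact hP1
    have hhom : R.f V G ≤ R.f _ (G.induce (↑S : Set V)) := by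
      refine R.mono _ V (G.induce (↑S : Set V)) G
        ⟨fun v => ⟨v, by rw [hSuniv]; simp⟩, fun {a b} hab => ?_⟩
      rw [SimpleGraph.compl_adj] at hab ⊢
      exact ⟨fun h => hab.1 (congrArg Subtype.val h), hab.2⟩
    have hmono : Real.logb 2 (R.f V G) ≤ Real.logb 2 (R.f _ (G.induce (↑S : Set V))) := by
      rw [Real.logb_le_logb one_lt_two (by linarith) (by linarith)]
      exact hhom
    rw [hpeq]
    simp only [sub_self, zero_mul]
    linarith
  · -- main case : S ≠ ∅ and Sᶜ ≠ ∅
    set T : Finset V := Sᶜ with hTdef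
    obtain ⟨w₀, hw₀⟩ := Finset.nonempty_iff_ne_empty.2 hTne
    haveI hB : Nonempty ↥((↑T : Set V)) := ⟨⟨w₀, by simpa using hw₀⟩⟩
    have hq : ∑ v ∈ T, P v = 1 - p := by
      have h := Finset.sum_add_sum_compl S P
      rw [hP1] at h
      linarith
    set A := ↥((↑S : Set V))
    set B := ↥((↑T : Set V))
    set G₁ := G.induce (↑S : Set V) with hG₁
    set G₂ := G.induce (↑T : Set V) with hG₂
    -- the distributions
    set Q₁ : A → ℝ := if p = 0 then (fun _ => ((Fintype.card A : ℝ))⁻¹)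
      else fun a => P ↑a / p with hQ₁def
    set Q₂ : B → ℝ := if (1 - p) = 0 then (fun _ => ((Fintype.card B : ℝ))⁻¹)
      else fun b => P ↑b / (1 - p) with hQ₂def
    have hcardA : (0:ℝ) < (Fintype.card A : ℝ) := by
      exact_mod_cast Fintype.card_pos
    have hcardB : (0:ℝ) < (Fintype.card B : ℝ) := by
      exact_mod_cast Fintype.card_pos
    have hsumA : ∑ a : A, P ↑a = p := by
      rw [hp]; exact Finset.sum_finset_coe P S
    have hsumB : ∑ b : B, P ↑b = 1 - p := by
      rw [← hq]; exact Finset.sum_finset_coe P T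
    have hQ₁ : IsDistr Q₁ := by
      rw [hQ₁def]
      split_ifs with h0
      · refine ⟨fun _ => by positivity, ?_⟩
        rw [Finset.sum_const, Finset.card_univ, nsmul_eq_mul]
        exact mul_inv_cancel₀ (ne_of_gt hcardA)
      · refine ⟨fun a => div_nonneg (hP0 _) hp0, ?_⟩
        rw [← Finset.sum_div, hsumA, div_self h0]
    have hQ₂ : IsDistr Q₂ := by
      rw [hQ₂def]
      split_ifs with h0
      · refine ⟨fun _ => by positivity, ?_⟩
        rw [Finset.sum_const, Finset.card_univ, nsmul_eq_mul]
        exact mul_inv_cancel₀ (ne_of_gt hcardB)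
      · refine ⟨fun b => div_nonneg (hP0 _) (by linarith [hp1]), ?_⟩
        rw [← Finset.sum_div, hsumB, div_self h0]
    -- the map
    set φ : V → A ⊕ B := fun v =>
      if h : v ∈ S then Sum.inl ⟨v, by simpa using h⟩
      else Sum.inr ⟨v, by simpa [hTdef] using h⟩ with hφdef
    have hinj : Function.Injective φ := by
      intro u v h
      by_cases hu : u ∈ S <;> by_cases hv : v ∈ S <;>
        simp only [hφdef, dif_pos, dif_neg, hu, hv, dite_true, dite_false] at h <;>
        first
          | exact congrArg Subtype.val (Sum.inl.inj h)
          | exact congrArg Subtype.val (Sum.inr.inj h)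
          | exact absurd h (by simp)
    have hhomφ : ∀ a b : V, Gᶜ.Adj a b → (sumGraph G₁ G₂)ᶜ.Adj (φ a) (φ b) := by
      intro a b hab
      rw [SimpleGraph.compl_adj] at hab ⊢
      refine ⟨fun h => hab.1 (hinj h), fun hAdj => ?_⟩
      by_cases ha : a ∈ S <;> by_cases hb : b ∈ S <;>
        simp only [hφdef, ha, hb, dite_true, dite_false, sumGraph,
          Sum.liftRel_inl_inl, Sum.liftRel_inr_inr] at hAdj
      · exact hab.2 hAdj
      · cases hAdj
      · cases hAdj
      · exact hab.2 hAdj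
    set ψ : Gᶜ →g (sumGraph G₁ G₂)ᶜ := ⟨φ, fun {a b} h => hhomφ a b h⟩ with hψdef
    have hσ : ∀ x : A ⊕ B, φ (Sum.elim Subtype.val Subtype.val x) = x := by
      rintro (⟨a, ha⟩ | ⟨b, hb⟩)
      · simp only [Sum.elim_inl, hφdef]
        rw [dif_pos (by simpa using ha)]
      · simp only [Sum.elim_inr, hφdef]
        rw [dif_neg (by simpa [hTdef] using hb)]
    have hpushval : ∀ x : A ⊕ B, push φ P x = P (Sum.elim Subtype.val Subtype.val x) := by
      intro x
      simp only [push]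
      refine (Fintype.sum_eq_single (Sum.elim Subtype.val Subtype.val x) ?_).trans
        (if_pos (hσ x))
      intro w hw
      exact if_neg fun h => hw (hinj (h.trans (hσ x).symm))
    have hPzeroS : p = 0 → ∀ a : A, P ↑a = 0 := by
      intro h0 a
      exact (Finset.sum_eq_zero_iff_of_nonneg (fun v _ => hP0 v)).1 h0 ↑a (by simpa using a.2)
    have hPzeroT : (1 - p) = 0 → ∀ b : B, P ↑b = 0 := by
      intro h0 b
      have : ∑ v ∈ T, P v = 0 := by rw [hq]; linarith
      exact (Finset.sum_eq_zero_iff_of_nonneg (fun v _ => hP0 v)).1 this ↑b (by simpa using b.2)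
    have hpush : push φ P =
        Sum.elim (fun a : A => p * Q₁ a) (fun b : B => (1 - p) * Q₂ b) := by
      funext x
      rw [hpushval x]
      rcases x with a | b
      · simp only [Sum.elim_inl, hQ₁def]
        split_ifs with h0
        · rw [hPzeroS h0 a, h0, zero_mul]
        · rw [mul_div_cancel₀ _ h0]
      · simp only [Sum.elim_inr, hQ₂def]
        split_ifs with h0
        · rw [hPzeroT h0 b, h0, zero_mul]
        · rw [mul_div_cancel₀ _ h0]
    have hmono := R.monoF (A ⊕ B) V (sumGraph G₁ G₂) G ψ P ⟨hP0, hP1⟩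
    have hψφ : push (⇑ψ) P = push φ P := rfl
    rw [hψφ, hpush] at hmono
    have hsumF := R.map_sumF A B G₁ G₂ Q₁ Q₂ p hQ₁ hQ₂ hp0 hp1
    rw [hsumF] at hmono
    -- bound the pieces
    have hF₁ : R.F A G₁ Q₁ ≤ Real.logb 2 (R.f A G₁) := R.le_logf A G₁ Q₁ hQ₁
    have hF₂ : R.F B G₂ Q₂ ≤ Real.logb 2 (R.f B G₂) := R.le_logf B G₂ Q₂ hQ₂
    have hfB1 : (1:ℝ) ≤ R.f B G₂ := one_le_f R.toSpectralPoint B G₂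
    have hfBcard : R.f B G₂ ≤ (Fintype.card V : ℝ) := by
      refine le_trans (f_le_card R.toSpectralPoint B G₂) ?_
      exact_mod_cast Fintype.card_le_of_injective (Subtype.val : B → V) Subtype.val_injective
    have hlog₂ : Real.logb 2 (R.f B G₂) ≤ Real.logb 2 (Fintype.card V : ℝ) := by
      rw [Real.logb_le_logb one_lt_two (by linarith) (by linarith)]
      exact hfBcard
    have hbe : binEnt p ≤ 1 := binEnt_le_one p
    have h1 : p * R.F A G₁ Q₁ ≤ p * Real.logb 2 (R.f A G₁) :=
      mul_le_mul_of_nonneg_left hF₁ hp0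
    have h2 : (1 - p) * R.F B G₂ Q₂ ≤ (1 - p) * Real.logb 2 (Fintype.card V : ℝ) :=
      mul_le_mul_of_nonneg_left (le_trans hF₂ hlog₂) (by linarith)
    have h3 : p * Real.logb 2 (R.f A G₁) ≤ Real.logb 2 (R.f A G₁) := by
      have : 0 ≤ Real.logb 2 (R.f A G₁) := hlogS
      nlinarith
    have hgoal : R.F V G P ≤ Real.logb 2 (R.f A G₁) +
        (1 - p) * Real.logb 2 (Fintype.card V : ℝ) + 1 := by
      linarith
    linarith

end
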